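/- Let {A, B, C, D} be a polyphase GCA quad in which A and B have size s_1×⋯×s_i×⋯×s_r and C and D have size s_1×⋯×s_i'×⋯×s_r (for a fixed dimension index i), and let {I, J} be a polyphase GCA pair of size t_1×⋯×t_r. Define A' = A | 0_{s_i'}, B' = B | 0_{s_i'}, C' = 0_{s_i} | C, and D' = 0_{s_i} | D, concatenating in the i-th dimension with zero arrays of the indicated extent, so that A', B', C', D' have size s_1×⋯×(s_i+s_i')×⋯×s_r. Define E = A'⊗I + C'⊗J, F = A'⊗J* − C'⊗I*, G = B'⊗I + D'⊗J, and H = B'⊗J* − D'⊗I*. Then {E, F, G, H} is a polyphase GCA quad of size s_1t_1×⋯×(s_i+s_i')t_i×⋯×s_rt_r. -/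

import Mathlib

open scoped BigOperators

/-- An `r`-dimensional complex array, as a complex-valued function on ℤ^r. -/
abbrev Arr (r : ℕ) := (Fin r → ℤ) → ℂ

/-- Index tuple `i` lies in the box `[0, s₁) × ⋯ × [0, s_r)`. -/
def InBox {r : ℕ} (s : Fin r → ℕ) (i : Fin r → ℤ) : Prop :=
  ∀ k, 0 ≤ i k ∧ i k < (s k : ℤ)

/-- The array vanishes outside the box of size `s`. -/
def SupportedOn {r : ℕ} (s : Fin r → ℕ) (A : Arr r) : Prop :=
  ∀ i, ¬ InBox s i → A i = 0

/-- Aperiodic autocorrelation of an array. -/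
noncomputable def autocorr {r : ℕ} (A : Arr r) (δ : Fin r → ℤ) : ℂ :=
  ∑ᶠ i : Fin r → ℤ, A i * (starRingEnd ℂ) (A (i - δ))

/-- Weight of an array: the sum of squared moduli of its entries. -/
noncomputable def weight {r : ℕ} (A : Arr r) : ℝ :=
  ∑ᶠ i : Fin r → ℤ, ‖A i‖ ^ 2

/-- Flipped-and-conjugated array `A*`, relative to size `s`. -/
noncomputable def flipConj {r : ℕ} (s : Fin r → ℕ) (A : Arr r) : Arr r :=
  fun i => (starRingEnd ℂ) (A fun k => (s k : ℤ) - 1 - i k)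

/-- Kronecker product of arrays, where `t` is the size of `B`:
`(A ⊗ B)[i·t + j] = A[i]·B[j]`. -/
noncomputable def kron {r : ℕ} (t : Fin r → ℕ) (A B : Arr r) : Arr r :=
  fun i => A (fun k => i k / (t k : ℤ)) * B (fun k => i k % (t k : ℤ))

/-- Concatenation of `X` (of extent `u` in dimension `i0`) and `Y` in dimension `i0`. -/
noncomputable def concat {r : ℕ} (i0 : Fin r) (u : ℕ) (X Y : Arr r) : Arr r :=
  fun v => if v i0 < (u : ℤ) then X v else Y (Function.update v i0 (v i0 - u))

/-- A polyphase array of size `s`: supported on the box and all in-box entries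
are `N`-th roots of unity for some `N`. -/
def IsPolyphase {r : ℕ} (s : Fin r → ℕ) (A : Arr r) : Prop :=
  SupportedOn s A ∧ ∃ N : ℕ, 0 < N ∧ ∀ i, InBox s i → A i ^ N = 1

/-- A binary array of size `s`: all in-box entries are ±1, zero outside. -/
def IsBinary {r : ℕ} (s : Fin r → ℕ) (A : Arr r) : Prop :=
  SupportedOn s A ∧ ∀ i, InBox s i → A i = 1 ∨ A i = -1

/-- Entries are zero or of modulus one, supported on the box of size `s`. -/
def IsUnimodZero {r : ℕ} (s : Fin r → ℕ) (A : Arr r) : Prop :=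
  SupportedOn s A ∧ ∀ i, InBox s i → A i = 0 ∨ ‖A i‖ = 1

/-- Golay complementarity of a pair: `R_A + R_B = (w(A)+w(B))·Δ`. -/
def ComplementaryPair {r : ℕ} (A B : Arr r) : Prop :=
  ∀ δ : Fin r → ℤ, autocorr A δ + autocorr B δ =
    if δ = 0 then ((weight A + weight B : ℝ) : ℂ) else 0

/-- Golay complementarity of a quad: `R_A + R_B + R_C + R_D = (Σ w)·Δ`. -/
def ComplementaryQuad {r : ℕ} (A B C D : Arr r) : Prop :=
  ∀ δ : Fin r → ℤ, autocorr A δ + autocorr B δ + autocorr C δ + autocorr D δ =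
    if δ = 0 then ((weight A + weight B + weight C + weight D : ℝ) : ℂ) else 0

/-!
Padding A, B with zeros after them and C, D with zeros before them in dimension `i0` changes
neither autocorrelations nor weights, so {A', B', C', D'} is a complementary quad of arrays of
one common size. Cross-correlations of Kronecker products factor as
`R_{X⊗P, Y⊗Q}(δ) = Σ_α R_{X,Y}(α) · R_{P,Q}(δ - t·α)`, and flipping and conjugating both
arguments of a cross-correlation swaps them. Hence in `R_E + R_F` the mixed terms cancel and
what is left is `Σ_α (R_{A'} + R_{C'})(α) · (R_I + R_J)(δ - t·α)`; adding `R_G + R_H` gives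
`Σ_α (R_{A'} + R_{B'} + R_{C'} + R_{D'})(α) · (R_I + R_J)(δ - t·α)`, and for `δ ≠ 0` every term
vanishes because the first factor is supported at `α = 0` and the second at `δ - t·α = 0`.
The arrays are polyphase because `E = (A⊗I) | (C⊗J)` and `F = (A⊗J*) | (-C⊗I*)`.
-/

open Finset Function ComplexConjugate

variable {r : ℕ}

section Boxes

noncomputable def boxFinset (s : Fin r → ℕ) : Finset (Fin r → ℤ) :=
  Fintype.piFinset fun k => Ico 0 (s k : ℤ)

@[simp]
lemma mem_boxFinset {s : Fin r → ℕ} {i : Fin r → ℤ} : i ∈ boxFinset s ↔ InBox s i := by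
  simp [boxFinset, InBox]

lemma InBox.pos {t : Fin r → ℕ} {j : Fin r → ℤ} (hj : InBox t j) (k : Fin r) : 0 < (t k : ℤ) :=
  (hj k).1.trans_lt (hj k).2

lemma InBox.flip {t : Fin r → ℕ} {j : Fin r → ℤ} (hj : InBox t j) :
    InBox t fun k => (t k : ℤ) - 1 - j k :=
  fun k => by have := hj k; dsimp only; omega

lemma inBox_mul_iff {u t : Fin r → ℕ} {i : Fin r → ℤ} :
    InBox (fun k => u k * t k) i ↔
      InBox u (fun k => i k / t k) ∧ InBox t (fun k => i k % t k) := by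
  simp only [InBox, Nat.cast_mul, ← forall_and]
  refine forall_congr' fun k => ?_
  rcases (Nat.cast_nonneg (α := ℤ) (t k)).eq_or_lt with ht | ht
  · simp only [← ht, mul_zero, Int.ediv_zero, Int.emod_zero]
    omega
  · rw [Int.ediv_nonneg_iff_of_pos ht, Int.ediv_lt_iff_lt_mul ht]
    have := Int.emod_nonneg (i k) ht.ne'
    have := Int.emod_lt_of_pos (i k) ht
    tauto

lemma InBox.ediv_emod_eq {t : Fin r → ℕ} {q j : Fin r → ℤ} (hj : InBox t j) :
    (fun k => (t k * q k + j k) / t k) = q ∧ (fun k => (t k * q k + j k) % t k) = j := by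
  have h (k : Fin r) := (Int.ediv_emod_unique (a := t k * q k + j k) (q := q k) (hj.pos k)).2
    ⟨add_comm _ _, hj k⟩
  exact ⟨funext fun k => (h k).1, funext fun k => (h k).2⟩

lemma InBox.ediv_eq {t : Fin r → ℕ} {m q : Fin r → ℤ} (h : InBox t fun k => m k - t k * q k) :
    (fun k => m k / t k) = q :=
  funext fun k => ((Int.ediv_emod_unique (r := m k - t k * q k) (h.pos k)).2
    ⟨sub_add_cancel _ _, h k⟩).1

lemma sum_boxFinset_mul {M : Type*} [AddCommMonoid M] (u t : Fin r → ℕ) (f : (Fin r → ℤ) → M) :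
    ∑ i ∈ boxFinset (fun k => u k * t k), f i =
      ∑ q ∈ boxFinset u, ∑ j ∈ boxFinset t, f fun k => t k * q k + j k := by
  rw [← sum_product']
  refine sum_nbij' (fun i => ((fun k => i k / t k), fun k => i k % t k))
    (fun p k => t k * p.1 k + p.2 k) ?_ ?_ ?_ ?_ ?_
  · intro i hi
    simpa only [mem_product, mem_boxFinset] using inBox_mul_iff.1 (mem_boxFinset.1 hi)
  · rintro ⟨q, j⟩ h
    rw [mem_product, mem_boxFinset, mem_boxFinset] at h
    rw [mem_boxFinset, inBox_mul_iff, h.2.ediv_emod_eq.1, h.2.ediv_emod_eq.2]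
    exact h
  · intro i _
    exact funext fun k => Int.mul_ediv_add_emod (i k) (t k)
  · rintro ⟨q, j⟩ h
    obtain ⟨hq, hj⟩ := (mem_boxFinset.1 (mem_product.1 h).2).ediv_emod_eq (q := q)
    exact Prod.ext hq hj
  · intro i _
    exact congrArg f (funext fun k => (Int.mul_ediv_add_emod (i k) (t k)).symm)

noncomputable def lagFinset (u : Fin r → ℕ) : Finset (Fin r → ℤ) :=
  Fintype.piFinset fun k => Ioo (-(u k : ℤ)) (u k)

lemma sub_mem_lagFinset {u : Fin r → ℕ} {q q' : Fin r → ℤ} (hq : InBox u q) (hq' : InBox u q') :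
    q - q' ∈ lagFinset u := by
  simp only [lagFinset, Fintype.mem_piFinset, mem_Ioo, Pi.sub_apply]
  intro k
  have := hq k
  have := hq' k
  omega

end Boxes

section Support

variable {s t : Fin r → ℕ} {X Y P : Arr r}

lemma supportedOn_zero : SupportedOn s (0 : Arr r) := fun _ _ => rfl

lemma SupportedOn.add (hX : SupportedOn s X) (hY : SupportedOn s Y) : SupportedOn s (X + Y) :=
  fun i hi => by rw [Pi.add_apply, hX i hi, hY i hi, add_zero]

lemma SupportedOn.sub (hX : SupportedOn s X) (hY : SupportedOn s Y) : SupportedOn s (X - Y) :=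
  fun i hi => by rw [Pi.sub_apply, hX i hi, hY i hi, sub_zero]

lemma SupportedOn.neg (hX : SupportedOn s X) : SupportedOn s (-X) :=
  fun i hi => by rw [Pi.neg_apply, hX i hi, neg_zero]

lemma SupportedOn.flipConj (hP : SupportedOn t P) : SupportedOn t (flipConj t P) :=
  fun i hi => by
    show conj (P _) = 0
    rw [hP _ fun h => hi (by simpa using h.flip), map_zero]

lemma SupportedOn.kron (hX : SupportedOn s X) (hP : SupportedOn t P) :
    SupportedOn (fun k => s k * t k) (kron t X P) := by
  intro i hi
  rcases not_and_or.1 (inBox_mul_iff.not.1 hi) with h | h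
  · show X _ * P _ = 0
    rw [hX _ h, zero_mul]
  · show X _ * P _ = 0
    rw [hP _ h, mul_zero]

lemma finsum_eq_sum_boxFinset {M : Type*} [AddCommMonoid M] {f : (Fin r → ℤ) → M}
    (hf : ∀ i, ¬ InBox s i → f i = 0) : ∑ᶠ i, f i = ∑ i ∈ boxFinset s, f i :=
  finsum_eq_sum_of_support_subset f fun i hi => by
    simpa using not_imp_comm.1 (hf i) hi

end Support

noncomputable def corr (X Y : Arr r) (δ : Fin r → ℤ) : ℂ :=
  ∑ᶠ i : Fin r → ℤ, X i * conj (Y (i - δ))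

section Correlation

variable {s t : Fin r → ℕ} {X Y : Arr r}

lemma autocorr_eq_corr (X : Arr r) : autocorr X = corr X X := rfl

lemma SupportedOn.corr_eq_sum (hX : SupportedOn s X) (Y : Arr r) (δ : Fin r → ℤ) :
    corr X Y δ = ∑ i ∈ boxFinset s, X i * conj (Y (i - δ)) :=
  finsum_eq_sum_boxFinset fun i hi => by rw [hX i hi, zero_mul]

lemma SupportedOn.weight_eq_autocorr_zero (hX : SupportedOn s X) :
    (weight X : ℂ) = autocorr X 0 := by
  rw [weight, finsum_eq_sum_boxFinset fun i hi => by rw [hX i hi, norm_zero, sq, mul_zero],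
    autocorr_eq_corr, hX.corr_eq_sum, Complex.ofReal_sum]
  refine sum_congr rfl fun i _ => ?_
  rw [sub_zero, Complex.mul_conj, Complex.normSq_eq_norm_sq, Complex.ofReal_pow]

lemma corr_comp_sub (X Y : Arr r) (c δ : Fin r → ℤ) :
    corr (fun v => X (v - c)) (fun v => Y (v - c)) δ = corr X Y δ := by
  rw [corr, corr, ← finsum_comp_equiv (Equiv.subRight c) (f := fun i => X i * conj (Y (i - δ)))]
  simp only [Equiv.subRight_apply, sub_right_comm _ c δ]

lemma autocorr_comp_sub (X : Arr r) (c : Fin r → ℤ) :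
    autocorr (fun v => X (v - c)) = autocorr X :=
  funext (corr_comp_sub X X c)

lemma weight_comp_sub (X : Arr r) (c : Fin r → ℤ) : weight (fun v => X (v - c)) = weight X :=
  finsum_comp_equiv (Equiv.subRight c) (f := fun v => ‖X v‖ ^ 2)

lemma corr_flipConj (P Q : Arr r) (δ : Fin r → ℤ) :
    corr (flipConj t P) (flipConj t Q) δ = corr Q P δ := by
  let c : Fin r → ℤ := fun k => (t k : ℤ) - 1
  calc corr (flipConj t P) (flipConj t Q) δ
      = ∑ᶠ i, conj (P (c - i)) * Q (c - i + δ) := by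
        refine finsum_congr fun i => ?_
        simp only [flipConj, Complex.conj_conj]
        congr 2
        funext k
        simp only [c, Pi.sub_apply, Pi.add_apply]
        ring
    _ = ∑ᶠ m, conj (P m) * Q (m + δ) :=
        finsum_comp_equiv (Equiv.subLeft c) (f := fun m => conj (P m) * Q (m + δ))
    _ = corr Q P δ := by
        rw [corr, ← finsum_comp_equiv (Equiv.addRight δ) (f := fun i => Q i * conj (P (i - δ)))]
        simp only [Equiv.coe_addRight, add_sub_cancel_right, mul_comm]

lemma autocorr_add (hX : SupportedOn s X) (hY : SupportedOn s Y) (δ : Fin r → ℤ) :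
    autocorr (X + Y) δ = corr X X δ + corr X Y δ + corr Y X δ + corr Y Y δ := by
  simp only [autocorr_eq_corr, (hX.add hY).corr_eq_sum, hX.corr_eq_sum, hY.corr_eq_sum,
    ← sum_add_distrib, Pi.add_apply, map_add]
  exact sum_congr rfl fun i _ => by ring

lemma autocorr_sub (hX : SupportedOn s X) (hY : SupportedOn s Y) (δ : Fin r → ℤ) :
    autocorr (X - Y) δ = corr X X δ - corr X Y δ - corr Y X δ + corr Y Y δ := by
  simp only [autocorr_eq_corr, (hX.sub hY).corr_eq_sum, hX.corr_eq_sum, hY.corr_eq_sum,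
    ← sum_add_distrib, ← sum_sub_distrib, Pi.sub_apply, map_sub]
  exact sum_congr rfl fun i _ => by ring

end Correlation

section Kronecker

variable {u t : Fin r → ℕ} {X Y P Q : Arr r}

lemma sum_lagFinset_conj_mul_conj (hY : SupportedOn u Y) (hQ : SupportedOn t Q)
    {q : Fin r → ℤ} (hq : InBox u q) (j δ : Fin r → ℤ) :
    ∑ α ∈ lagFinset u, conj (Y (q - α)) * conj (Q (j - fun k => δ k - t k * α k)) =
      conj (Y fun k => (t k * q k + j k - δ k) / t k) *
        conj (Q fun k => (t k * q k + j k - δ k) % t k) := by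
  set m : Fin r → ℤ := fun k => t k * q k + j k - δ k
  -- Only `α = q - m / t` contributes: `m - t * β` lies in the box of `Q` only for `β = m / t`.
  have hshift (α : Fin r → ℤ) :
      (j - fun k => δ k - t k * α k) = fun k => m k - t k * (q - α) k := by
    funext k
    simp only [m, Pi.sub_apply]
    ring
  rw [sum_eq_single (q - fun k => m k / t k)]
  · rw [hshift, sub_sub_cancel]
    congr 3
    funext k
    rw [Int.emod_def]
  · intro α _ hα
    rw [hQ _ fun h => hα ?_, map_zero, mul_zero]
    rw [hshift] at h
    rw [h.ediv_eq, sub_sub_cancel]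
  · intro hα
    rw [sub_sub_cancel, hY _ fun h => hα (sub_mem_lagFinset hq h), map_zero, zero_mul]

lemma corr_kron (hX : SupportedOn u X) (hY : SupportedOn u Y) (hP : SupportedOn t P)
    (hQ : SupportedOn t Q) (δ : Fin r → ℤ) :
    corr (kron t X P) (kron t Y Q) δ =
      ∑ α ∈ lagFinset u, corr X Y α * corr P Q (fun k => δ k - t k * α k) := by
  simp only [(hX.kron hP).corr_eq_sum, hX.corr_eq_sum, hP.corr_eq_sum, sum_mul_sum]
  rw [sum_boxFinset_mul, sum_comm (s := lagFinset u)]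
  refine sum_congr rfl fun q hq => ?_
  rw [sum_comm (s := lagFinset u)]
  refine sum_congr rfl fun j hj => ?_
  rw [mem_boxFinset] at hq hj
  obtain ⟨hq', hj'⟩ := hj.ediv_emod_eq (q := q)
  simp only [kron, Pi.sub_apply, hq', hj', map_mul]
  rw [← sum_lagFinset_conj_mul_conj hY hQ hq j δ, mul_sum]
  exact sum_congr rfl fun α _ => by ring

end Kronecker

section Complementarity

variable {u t : Fin r → ℕ} {A B C D I J X Z P Q : Arr r}

lemma autocorr_kron_add_autocorr_kron_flipConj (hX : SupportedOn u X) (hZ : SupportedOn u Z)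
    (hP : SupportedOn t P) (hQ : SupportedOn t Q) (δ : Fin r → ℤ) :
    autocorr (kron t X P + kron t Z Q) δ +
        autocorr (kron t X (flipConj t Q) - kron t Z (flipConj t P)) δ =
      ∑ α ∈ lagFinset u, (autocorr X α + autocorr Z α) *
        (autocorr P (fun k => δ k - t k * α k) + autocorr Q (fun k => δ k - t k * α k)) := by
  have hP' := hP.flipConj
  have hQ' := hQ.flipConj
  rw [autocorr_add (hX.kron hP) (hZ.kron hQ), autocorr_sub (hX.kron hQ') (hZ.kron hP'),
    corr_kron hX hX hP hP, corr_kron hX hZ hP hQ, corr_kron hZ hX hQ hP, corr_kron hZ hZ hQ hQ,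
    corr_kron hX hX hQ' hQ', corr_kron hX hZ hQ' hP', corr_kron hZ hX hP' hQ',
    corr_kron hZ hZ hP' hP']
  simp only [corr_flipConj, autocorr_eq_corr, ← sum_add_distrib, ← sum_sub_distrib]
  exact sum_congr rfl fun α _ => by ring

lemma ComplementaryQuad.of_ne_zero {s : Fin r → ℕ} (hA : SupportedOn s A)
    (hB : SupportedOn s B) (hC : SupportedOn s C) (hD : SupportedOn s D)
    (h : ∀ δ ≠ 0, autocorr A δ + autocorr B δ + autocorr C δ + autocorr D δ = 0) :
    ComplementaryQuad A B C D := by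
  intro δ
  split_ifs with hδ
  · rw [hδ]
    push_cast
    rw [hA.weight_eq_autocorr_zero, hB.weight_eq_autocorr_zero, hC.weight_eq_autocorr_zero,
      hD.weight_eq_autocorr_zero]
  · exact h δ hδ

theorem ComplementaryQuad.kron (hquad : ComplementaryQuad A B C D) (hIJ : ComplementaryPair I J)
    (hA : SupportedOn u A) (hB : SupportedOn u B) (hC : SupportedOn u C) (hD : SupportedOn u D)
    (hI : SupportedOn t I) (hJ : SupportedOn t J) :
    ComplementaryQuad (kron t A I + kron t C J) (kron t A (flipConj t J) - kron t C (flipConj t I))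
      (kron t B I + kron t D J) (kron t B (flipConj t J) - kron t D (flipConj t I)) := by
  have hI' := hI.flipConj
  have hJ' := hJ.flipConj
  refine .of_ne_zero ((hA.kron hI).add (hC.kron hJ)) ((hA.kron hJ').sub (hC.kron hI'))
    ((hB.kron hI).add (hD.kron hJ)) ((hB.kron hJ').sub (hD.kron hI')) fun δ hδ => ?_
  rw [add_assoc (_ + _), autocorr_kron_add_autocorr_kron_flipConj hA hC hI hJ,
    autocorr_kron_add_autocorr_kron_flipConj hB hD hI hJ, ← sum_add_distrib]
  refine sum_eq_zero fun α _ => ?_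
  rw [← add_mul, show autocorr A α + autocorr C α + (autocorr B α + autocorr D α) =
    autocorr A α + autocorr B α + autocorr C α + autocorr D α by ring]
  by_cases hα : α = 0
  · have hδ' : (fun k => δ k - t k * α k) = δ := by simp [hα]
    rw [hδ', hIJ δ, if_neg hδ, mul_zero]
  · rw [hquad α, if_neg hα, zero_mul]

end Complementarity

section Concatenation

variable {s u t : Fin r → ℕ} {i0 : Fin r} {s' : ℕ} {A B C D X Y P Q : Arr r}

lemma inBox_update_add_iff_of_lt {v : Fin r → ℤ} (h : v i0 < s i0) :
    InBox (update s i0 (s i0 + s')) v ↔ InBox s v := by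
  refine forall_congr' fun k => ?_
  rcases eq_or_ne k i0 with rfl | hk
  · simp only [update_self]
    push_cast
    omega
  · simp only [update_of_ne hk]

lemma inBox_update_add_iff_of_le {v : Fin r → ℤ} (h : (s i0 : ℤ) ≤ v i0) :
    InBox (update s i0 (s i0 + s')) v ↔ InBox (update s i0 s') (update v i0 (v i0 - s i0)) := by
  refine forall_congr' fun k => ?_
  rcases eq_or_ne k i0 with rfl | hk
  · simp only [update_self]
    push_cast
    omega
  · simp only [update_of_ne hk]

lemma SupportedOn.concat (hX : SupportedOn s X) (hY : SupportedOn (update s i0 s') Y) :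
    SupportedOn (update s i0 (s i0 + s')) (concat i0 (s i0) X Y) := by
  intro v hv
  unfold _root_.concat
  split_ifs with h
  · exact hX v ((inBox_update_add_iff_of_lt h).not.1 hv)
  · exact hY _ ((inBox_update_add_iff_of_le (not_lt.1 h)).not.1 hv)

lemma IsPolyphase.concat (hX : IsPolyphase s X) (hY : IsPolyphase (update s i0 s') Y) :
    IsPolyphase (update s i0 (s i0 + s')) (concat i0 (s i0) X Y) := by
  obtain ⟨hXs, N, hN, hXN⟩ := hX
  obtain ⟨hYs, M, hM, hYM⟩ := hY
  refine ⟨hXs.concat hYs, N * M, Nat.mul_pos hN hM, fun v hv => ?_⟩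
  unfold _root_.concat
  split_ifs with h
  · rw [pow_mul, hXN v ((inBox_update_add_iff_of_lt h).1 hv), one_pow]
  · rw [pow_mul', hYM _ ((inBox_update_add_iff_of_le (not_lt.1 h)).1 hv), one_pow]

lemma IsPolyphase.kron (hX : IsPolyphase s X) (hP : IsPolyphase t P) :
    IsPolyphase (fun k => s k * t k) (kron t X P) := by
  obtain ⟨hXs, N, hN, hXN⟩ := hX
  obtain ⟨hPs, M, hM, hPM⟩ := hP
  refine ⟨hXs.kron hPs, N * M, Nat.mul_pos hN hM, fun i hi => ?_⟩
  obtain ⟨hq, hj⟩ := inBox_mul_iff.1 hi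
  rw [_root_.kron, mul_pow, pow_mul, hXN _ hq, pow_mul', hPM _ hj, one_pow, one_pow, one_mul]

lemma IsPolyphase.flipConj (hP : IsPolyphase t P) : IsPolyphase t (flipConj t P) := by
  obtain ⟨hPs, N, hN, hPN⟩ := hP
  exact ⟨hPs.flipConj, N, hN, fun i hi => by
    rw [_root_.flipConj, ← map_pow, hPN _ hi.flip, map_one]⟩

lemma IsPolyphase.neg (hX : IsPolyphase s X) : IsPolyphase s (-X) := by
  obtain ⟨hXs, N, hN, hXN⟩ := hX
  refine ⟨hXs.neg, 2 * N, by positivity, fun i hi => ?_⟩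
  rw [Pi.neg_apply, (even_two_mul N).neg_pow, pow_mul', hXN i hi, one_pow]

lemma kron_concat (hP : SupportedOn t P) (a : ℕ) (X Y : Arr r) :
    kron t (concat i0 a X Y) P = concat i0 (a * t i0) (kron t X P) (kron t Y P) := by
  funext v
  rcases (Nat.cast_nonneg (α := ℤ) (t i0)).eq_or_lt with ht | ht
  · have hP0 (w : Fin r → ℤ) : P w = 0 := hP w fun h => by have := h i0; omega
    simp [_root_.concat, _root_.kron, hP0]
  · have hlt : v i0 < (a * t i0 : ℕ) ↔ v i0 / t i0 < a := by
      push_cast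
      exact (Int.ediv_lt_iff_lt_mul ht).symm
    simp only [_root_.concat, _root_.kron, hlt]
    split_ifs
    · rfl
    · congr 2 <;> funext k <;> rcases eq_or_ne k i0 with rfl | hk
      · rw [update_self, update_self, Nat.cast_mul, Int.sub_mul_ediv_right _ _ ht.ne']
      · rw [update_of_ne hk, update_of_ne hk]
      · rw [update_self, Nat.cast_mul, Int.sub_mul_emod_self_right]
      · rw [update_of_ne hk]

lemma kron_concat_add_kron_concat (hP : SupportedOn t P) (hQ : SupportedOn t Q) (a : ℕ)
    (X Y : Arr r) :
    kron t (concat i0 a X 0) P + kron t (concat i0 a 0 Y) Q =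
      concat i0 (a * t i0) (kron t X P) (kron t Y Q) := by
  rw [kron_concat hP, kron_concat hQ]
  funext v
  simp only [Pi.add_apply, _root_.concat]
  split_ifs <;> simp [_root_.kron]

lemma kron_concat_sub_kron_concat (hP : SupportedOn t P) (hQ : SupportedOn t Q) (a : ℕ)
    (X Y : Arr r) :
    kron t (concat i0 a X 0) P - kron t (concat i0 a 0 Y) Q =
      concat i0 (a * t i0) (kron t X P) (kron t (-Y) Q) := by
  rw [kron_concat hP, kron_concat hQ]
  funext v
  simp only [Pi.sub_apply, _root_.concat]
  split_ifs <;> simp [_root_.kron]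

lemma update_mul_right (s t : Fin r → ℕ) (i0 : Fin r) (a : ℕ) :
    (fun k => update s i0 a k * t k) = update (fun k => s k * t k) i0 (a * t i0) := by
  funext k
  rcases eq_or_ne k i0 with rfl | hk <;> simp [*]

lemma isPolyphase_concat_kron (hX : IsPolyphase s X) (hY : IsPolyphase (update s i0 s') Y)
    (hP : IsPolyphase t P) (hQ : IsPolyphase t Q) :
    IsPolyphase (fun k => update s i0 (s i0 + s') k * t k)
      (concat i0 (s i0 * t i0) (kron t X P) (kron t Y Q)) := by
  have hYQ := hY.kron hQ
  rw [update_mul_right] at hYQ ⊢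
  rw [add_mul]
  exact (hX.kron hP).concat hYQ

lemma concat_zero_right_eq (hX : SupportedOn s X) : concat i0 (s i0) X 0 = X := by
  funext v
  unfold _root_.concat
  split_ifs with h
  · rfl
  · exact (hX v fun hv => h (hv i0).2).symm

lemma concat_zero_left_eq (hY : SupportedOn u Y) (a : ℕ) :
    concat i0 a 0 Y = fun v => Y (v - Pi.single i0 a) := by
  funext v
  unfold _root_.concat
  split_ifs with h
  · refine (hY _ fun hv => ?_).symm
    have := (hv i0).1
    simp only [Pi.sub_apply, Pi.single_eq_same] at this
    omega
  · congr 1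
    funext k
    rcases eq_or_ne k i0 with rfl | hk <;> simp [*]

lemma ComplementaryQuad.pad (h : ComplementaryQuad A B C D) (hA : SupportedOn s A)
    (hB : SupportedOn s B) (hC : SupportedOn u C) (hD : SupportedOn u D) :
    ComplementaryQuad (concat i0 (s i0) A 0) (concat i0 (s i0) B 0) (concat i0 (s i0) 0 C)
      (concat i0 (s i0) 0 D) := by
  rw [concat_zero_right_eq hA, concat_zero_right_eq hB, concat_zero_left_eq hC,
    concat_zero_left_eq hD]
  intro δ
  simpa only [autocorr_comp_sub, weight_comp_sub] using h δ

end Concatenation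

/-- from a polyphase GCA quad {A,B,C,D} with A,B of size s (extent s_{i0}
in dimension i0) and C,D of extent s' in dimension i0 (same extents elsewhere), and a
polyphase GCA pair {I,J} of size t, amend A' = A|0_{s'}, B' = B|0_{s'}, C' = 0_{s_{i0}}|C,
D' = 0_{s_{i0}}|D and set E = A'⊗I + C'⊗J, F = A'⊗J* − C'⊗I*, G = B'⊗I + D'⊗J,
H = B'⊗J* − D'⊗I*. Then {E,F,G,H} is a polyphase GCA quad of size
s₁t₁×⋯×(s_{i0}+s')t_{i0}×⋯×s_r t_r. -/
theorem stmt17 {r : ℕ} (s : Fin r → ℕ) (i0 : Fin r) (s' : ℕ) (t : Fin r → ℕ)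
    (A B C D I J : Arr r)
    (hA : IsPolyphase s A) (hB : IsPolyphase s B)
    (hC : IsPolyphase (Function.update s i0 s') C)
    (hD : IsPolyphase (Function.update s i0 s') D)
    (hquad : ComplementaryQuad A B C D)
    (hI : IsPolyphase t I) (hJ : IsPolyphase t J) (hIJ : ComplementaryPair I J)
    (A' B' C' D' E F G H : Arr r)
    (hA' : A' = fun v => if v i0 < (s i0 : ℤ) then A v else 0)
    (hB' : B' = fun v => if v i0 < (s i0 : ℤ) then B v else 0)
    (hC' : C' = fun v => if v i0 < (s i0 : ℤ) then 0
      else C (Function.update v i0 (v i0 - (s i0 : ℤ))))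
    (hD' : D' = fun v => if v i0 < (s i0 : ℤ) then 0
      else D (Function.update v i0 (v i0 - (s i0 : ℤ))))
    (hE : E = fun v => kron t A' I v + kron t C' J v)
    (hF : F = fun v => kron t A' (flipConj t J) v - kron t C' (flipConj t I) v)
    (hG : G = fun v => kron t B' I v + kron t D' J v)
    (hH : H = fun v => kron t B' (flipConj t J) v - kron t D' (flipConj t I) v) :
    IsPolyphase (fun k => Function.update s i0 (s i0 + s') k * t k) E ∧
      IsPolyphase (fun k => Function.update s i0 (s i0 + s') k * t k) F ∧
      IsPolyphase (fun k => Function.update s i0 (s i0 + s') k * t k) G ∧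
      IsPolyphase (fun k => Function.update s i0 (s i0 + s') k * t k) H ∧
      ComplementaryQuad E F G H := by
  have hE : E = kron t (concat i0 (s i0) A 0) I + kron t (concat i0 (s i0) 0 C) J := by
    subst_vars; rfl
  have hF : F = kron t (concat i0 (s i0) A 0) (flipConj t J) -
      kron t (concat i0 (s i0) 0 C) (flipConj t I) := by
    subst_vars; rfl
  have hG : G = kron t (concat i0 (s i0) B 0) I + kron t (concat i0 (s i0) 0 D) J := by
    subst_vars; rfl
  have hH : H = kron t (concat i0 (s i0) B 0) (flipConj t J) -
      kron t (concat i0 (s i0) 0 D) (flipConj t I) := by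
    subst_vars; rfl
  refine ⟨?_, ?_, ?_, ?_, ?_⟩
  · rw [hE, kron_concat_add_kron_concat hI.1 hJ.1]
    exact isPolyphase_concat_kron hA hC hI hJ
  · rw [hF, kron_concat_sub_kron_concat hJ.flipConj.1 hI.flipConj.1]
    exact isPolyphase_concat_kron hA hC.neg hJ.flipConj hI.flipConj
  · rw [hG, kron_concat_add_kron_concat hI.1 hJ.1]
    exact isPolyphase_concat_kron hB hD hI hJ
  · rw [hH, kron_concat_sub_kron_concat hJ.flipConj.1 hI.flipConj.1]
    exact isPolyphase_concat_kron hB hD.neg hJ.flipConj hI.flipConj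
  · rw [hE, hF, hG, hH]
    exact (hquad.pad hA.1 hB.1 hC.1 hD.1).kron hIJ (hA.1.concat supportedOn_zero)
      (hB.1.concat supportedOn_zero) (supportedOn_zero.concat hC.1)
      (supportedOn_zero.concat hD.1) hI.1 hJ.1
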